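/- arXiv:2503.06178 — 2 statements merged into one kernel-verified Lean document; each statement's English description precedes it below -/
import Mathlib

section
/- The spectral radius of the matrix A = F V^{-1}, where F = [[β, 0], [0, 0]] and V = [[ρ+ν, -ζ], [-ρ, ζ]] with β, ν, ρ, ζ > 0, equals β/ν. -/
/-! Since `det V = ν ζ`, the first row of `V⁻¹` is `(1/ν, 1/ν)` whatever `ρ` is, so
`F V⁻¹ = !![β/ν, β/ν; 0, 0]`. This matrix is upper triangular with eigenvalues `β/ν` and `0`. -/

open Matrix

theorem siqs_transition_inv {K : Type*} [Field K] (ν ρ ζ : K) (hν : ν ≠ 0) (hζ : ζ ≠ 0) :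
    (!![ρ + ν, -ζ; -ρ, ζ] : Matrix (Fin 2) (Fin 2) K)⁻¹ =
      !![1 / ν, 1 / ν; ρ / (ζ * ν), (ρ + ν) / (ζ * ν)] := by
  refine inv_eq_right_inv ?_
  ext i j
  fin_cases i <;> fin_cases j <;> simp [Matrix.mul_apply] <;> field_simp <;> ring

theorem spectrum_upperTriangular_fin_two {K : Type*} [Field K] (a b d : K) :
    spectrum K !![a, b; 0, d] = {a, d} := by
  ext μ
  have hdet : (algebraMap K (Matrix (Fin 2) (Fin 2) K) μ - !![a, b; 0, d]).det
      = (μ - a) * (μ - d) := by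
    simp [Matrix.det_fin_two, Matrix.algebraMap_matrix_apply]
  rw [spectrum.mem_iff, Matrix.isUnit_iff_isUnit_det, isUnit_iff_ne_zero, not_ne_iff, hdet,
    mul_eq_zero, sub_eq_zero, sub_eq_zero, Set.mem_insert_iff, Set.mem_singleton_iff]

theorem sSup_abs_pair (a d : ℝ) :
    sSup {r : ℝ | ∃ μ ∈ ({a, d} : Set ℝ), r = |μ|} = max |a| |d| := by
  have hset : {r : ℝ | ∃ μ ∈ ({a, d} : Set ℝ), r = |μ|} = {|a|, |d|} := by
    ext r; simp [eq_comm]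
  rw [hset]
  exact csSup_pair _ _

theorem siqs_spectral_radius_general (β ν ρ ζ : ℝ) (hβ : 0 < β) (hν : 0 < ν)
    (hζ : 0 < ζ) :
    sSup {r : ℝ | ∃ μ ∈ spectrum ℝ ((!![β, 0; 0, 0] : Matrix (Fin 2) (Fin 2) ℝ) *
      (!![ρ + ν, -ζ; -ρ, ζ] : Matrix (Fin 2) (Fin 2) ℝ)⁻¹), r = |μ|} = β / ν := by
  have hA : (!![β, 0; 0, 0] : Matrix (Fin 2) (Fin 2) ℝ) *
      (!![ρ + ν, -ζ; -ρ, ζ] : Matrix (Fin 2) (Fin 2) ℝ)⁻¹ = !![β / ν, β / ν; 0, 0] := by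
    rw [siqs_transition_inv ν ρ ζ hν.ne' hζ.ne', Matrix.mul_fin_two]
    simp only [zero_mul, add_zero, mul_one_div, zero_div]
  rw [hA, spectrum_upperTriangular_fin_two, sSup_abs_pair, abs_zero,
    abs_of_pos (div_pos hβ hν), max_eq_left (div_pos hβ hν).le]

/-- The spectral radius of the next-generation matrix `A = F V⁻¹` of the SIQS model,
with `F = !![β,0;0,0]` and `V = !![ρ+ν,-ζ;-ρ,ζ]`, equals `β/ν`. -/
theorem siqs_spectral_radius (β ν ρ ζ : ℝ) (hβ : 0 < β) (hν : 0 < ν) (hρ : 0 < ρ)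
    (hζ : 0 < ζ) :
    sSup {r : ℝ | ∃ μ ∈ spectrum ℝ ((!![β, 0; 0, 0] : Matrix (Fin 2) (Fin 2) ℝ) *
      (!![ρ + ν, -ζ; -ρ, ζ] : Matrix (Fin 2) (Fin 2) ℝ)⁻¹), r = |μ|} = β / ν :=
  siqs_spectral_radius_general β ν ρ ζ hβ hν hζ
end

section
/- Let β, ν, ζ, ρ > 0, N ∈ ℕ, and let p_{i,j}(t) for i,j ≥ 0, i+j ≤ N solve the SIQS master equations. Define r_ℓ = ∑_{i=0}^{ℓ} p_{i,ℓ-i}. Then d/dt r_ℓ = -(β(N-ℓ)/N + ν)·m_ℓ + (β/N)(N-(ℓ-1))·m_{ℓ-1} + ν·m_{ℓ+1}, where m_ℓ = ∑_{i=0}^{ℓ} i·p_{i,ℓ-i}; in particular, the fast rates ζ and ρ do not appear explicitly in the equation for r_ℓ. -/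
/-!
Each transition of the SIQS chain either moves `i + j` by one (infection, recovery) or stays on
the diagonal `i + j = ℓ` (quarantine `(i, j) ↦ (i - 1, j + 1)` and release `(i, j) ↦ (i + 1, j - 1)`).
Writing the master equation in flux form, the fluxes along the diagonal leave one state of it
and enter another, so they telescope away in the diagonal sum; the infection flux out of the
diagonal is `β i (N - ℓ) / N · p_{i,j}` because `i + j = ℓ` there.
-/

open Finset

section DiagonalReindexing

variable {M : Type*} [AddCommMonoid M] (f : ℕ → ℕ → M) (ℓ : ℕ)

theorem sum_range_diag_pred_fst :
    ∑ i ∈ range (ℓ + 1), (if i = 0 then 0 else f (i - 1) (ℓ - i)) =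
      ∑ i ∈ range ℓ, f i (ℓ - 1 - i) := by
  rw [sum_range_succ']
  simp only [Nat.add_sub_cancel, if_neg (Nat.succ_ne_zero _), if_pos, add_zero]
  exact sum_congr rfl fun i _ => by rw [Nat.sub_right_comm, Nat.sub_add_eq]

theorem sum_range_diag_succ_fst (h : f 0 (ℓ + 1) = 0) :
    ∑ i ∈ range (ℓ + 1), f (i + 1) (ℓ - i) = ∑ i ∈ range (ℓ + 2), f i (ℓ + 1 - i) := by
  simp [sum_range_succ' _ (ℓ + 1), h]

theorem sum_range_diag_succ_fst_pred_snd (h : f 0 ℓ = 0) :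
    ∑ i ∈ range (ℓ + 1), (if ℓ - i = 0 then 0 else f (i + 1) (ℓ - i - 1)) =
      ∑ i ∈ range (ℓ + 1), f i (ℓ - i) := by
  rw [sum_range_succ, sum_range_succ', Nat.sub_zero, h]
  simp only [Nat.sub_self, if_pos, add_zero]
  exact sum_congr rfl fun i hi => by
    rw [if_neg (by rw [mem_range] at hi; omega), Nat.sub_add_eq]

theorem sum_range_diag_pred_fst_succ_snd (h : f ℓ 0 = 0) :
    ∑ i ∈ range (ℓ + 1), (if i = 0 then 0 else f (i - 1) (ℓ - i + 1)) =
      ∑ i ∈ range (ℓ + 1), f i (ℓ - i) := by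
  rw [sum_range_succ', sum_range_succ, Nat.sub_self, h]
  simp only [Nat.add_sub_cancel, if_neg (Nat.succ_ne_zero _), if_pos, add_zero]
  exact sum_congr rfl fun i hi => by
    rw [show ℓ - (i + 1) + 1 = ℓ - i by rw [mem_range] at hi; omega]

end DiagonalReindexing

/-- Master equation of a walk on `ℕ × ℕ` with the four moves `(i, j) ↦ (i + 1, j)`, `(i - 1, j)`,
`(i - 1, j + 1)`, `(i + 1, j - 1)`, where `a i j`, `b i j`, `c i j`, `d i j` are the probability
fluxes of these moves out of `(i, j)`. -/
def fluxBalance {M : Type*} [AddCommGroup M] (a b c d : ℕ → ℕ → M) (i j : ℕ) : M :=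
  -(a i j + b i j + c i j + d i j) + (if i = 0 then 0 else a (i - 1) j) + b (i + 1) j +
    (if j = 0 then 0 else c (i + 1) (j - 1)) + (if i = 0 then 0 else d (i - 1) (j + 1))

theorem sum_range_fluxBalance_diag {M : Type*} [AddCommGroup M] (a b c d : ℕ → ℕ → M)
    (ℓ : ℕ) (hb : ∀ j, b 0 j = 0) (hc : ∀ j, c 0 j = 0) (hd : ∀ i, d i 0 = 0) :
    ∑ i ∈ range (ℓ + 1), fluxBalance a b c d i (ℓ - i) =
      -(∑ i ∈ range (ℓ + 1), (a i (ℓ - i) + b i (ℓ - i))) + ∑ i ∈ range ℓ, a i (ℓ - 1 - i) +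
        ∑ i ∈ range (ℓ + 2), b i (ℓ + 1 - i) := by
  simp only [fluxBalance, sum_add_distrib, sum_neg_distrib, sum_range_diag_pred_fst,
    sum_range_diag_succ_fst b ℓ (hb _), sum_range_diag_succ_fst_pred_snd c ℓ (hc _),
    sum_range_diag_pred_fst_succ_snd d ℓ (hd _)]
  abel

noncomputable def siqsRhs (β ν ζ ρ : ℝ) (N : ℕ) (q : ℕ → ℕ → ℝ) (i j : ℕ) : ℝ :=
  -(β * i * ((N : ℝ) - i - j) / N + ν * i + ζ * i + ρ * j) * q i j +
    (if i = 0 then 0 else β * ((i : ℝ) - 1) * ((N : ℝ) - ((i : ℝ) - 1) - j) / N * q (i - 1) j) +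
    ν * ((i : ℝ) + 1) * q (i + 1) j +
    (if j = 0 then 0 else ζ * ((i : ℝ) + 1) * q (i + 1) (j - 1)) +
    (if i = 0 then 0 else ρ * ((j : ℝ) + 1) * q (i - 1) (j + 1))

theorem siqsRhs_eq_fluxBalance (β ν ζ ρ : ℝ) (N : ℕ) (q : ℕ → ℕ → ℝ) (i j : ℕ) :
    siqsRhs β ν ζ ρ N q i j =
      fluxBalance (fun i j => β * i * ((N : ℝ) - i - j) / N * q i j) (fun i j => ν * i * q i j)
        (fun i j => ζ * i * q i j) (fun i j => ρ * j * q i j) i j := by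
  unfold siqsRhs fluxBalance
  split_ifs <;> simp_all [Nat.cast_pred, Nat.pos_of_ne_zero] <;> ring

theorem sum_range_infection_diag (β : ℝ) (N k : ℕ) (q : ℕ → ℕ → ℝ) :
    ∑ i ∈ range (k + 1), β * i * ((N : ℝ) - i - ((k - i : ℕ) : ℝ)) / N * q i (k - i) =
      β * ((N : ℝ) - k) / N * ∑ i ∈ range (k + 1), (i : ℝ) * q i (k - i) := by
  rw [mul_sum]
  refine sum_congr rfl fun i hi => ?_
  rw [Nat.cast_sub (Nat.lt_succ_iff.mp (mem_range.mp hi))]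
  ring

theorem siqs_diagonal_sum_master_equation_general (β ν ζ ρ : ℝ) (N : ℕ)
    (p : ℝ → ℕ → ℕ → ℝ)
    (hode : ∀ t : ℝ, ∀ i j : ℕ, i + j ≤ N → HasDerivAt (fun t => p t i j)
      (-(β * i * ((N : ℝ) - i - j) / N + ν * i + ζ * i + ρ * j) * p t i j +
        (if i = 0 then 0 else
          β * ((i : ℝ) - 1) * ((N : ℝ) - ((i : ℝ) - 1) - j) / N * p t (i - 1) j) +
        ν * ((i : ℝ) + 1) * p t (i + 1) j +
        (if j = 0 then 0 else ζ * ((i : ℝ) + 1) * p t (i + 1) (j - 1)) +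
        (if i = 0 then 0 else ρ * ((j : ℝ) + 1) * p t (i - 1) (j + 1))) t) :
    ∀ t : ℝ, ∀ ℓ : ℕ, ℓ ≤ N →
      HasDerivAt (fun t => ∑ i ∈ Finset.range (ℓ + 1), p t i (ℓ - i))
        (-(β * ((N : ℝ) - ℓ) / N + ν) *
            (∑ i ∈ Finset.range (ℓ + 1), (i : ℝ) * p t i (ℓ - i)) +
          (if ℓ = 0 then 0 else
            β / N * ((N : ℝ) - ((ℓ : ℝ) - 1)) *
              (∑ i ∈ Finset.range ℓ, (i : ℝ) * p t i (ℓ - 1 - i))) +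
          ν * (∑ i ∈ Finset.range (ℓ + 2), (i : ℝ) * p t i (ℓ + 1 - i))) t := by
  intro t ℓ hℓ
  have hsum : HasDerivAt (fun t => ∑ i ∈ range (ℓ + 1), p t i (ℓ - i))
      (∑ i ∈ range (ℓ + 1), siqsRhs β ν ζ ρ N (p t) i (ℓ - i)) t :=
    HasDerivAt.fun_sum fun i hi => hode t i (ℓ - i) (by rw [mem_range] at hi; omega)
  convert hsum using 1
  simp only [siqsRhs_eq_fluxBalance]
  rw [sum_range_fluxBalance_diag _ _ _ _ ℓ (by simp) (by simp) (by simp), sum_add_distrib,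
    sum_range_infection_diag]
  simp only [mul_assoc ν, ← mul_sum]
  rcases ℓ with _ | k
  · simp
  · simp only [Nat.cast_add, Nat.cast_one, Nat.add_eq_zero_iff, one_ne_zero, and_false,
      ↓reduceIte, add_tsub_cancel_right, sum_range_infection_diag]
    ring

/-- Summing the SIQS master equations along the diagonals `i + j = ℓ`: with
`r_ℓ = ∑_{i=0}^ℓ p_{i,ℓ-i}` and `m_ℓ = ∑_{i=0}^ℓ i p_{i,ℓ-i}`, the fast rates `ζ, ρ`
cancel and `d/dt r_ℓ = -(β(N-ℓ)/N + ν) m_ℓ + (β/N)(N-(ℓ-1)) m_{ℓ-1} + ν m_{ℓ+1}`. -/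
theorem siqs_diagonal_sum_master_equation (β ν ζ ρ : ℝ) (N : ℕ)
    (hβ : 0 < β) (hν : 0 < ν) (hζ : 0 < ζ) (hρ : 0 < ρ)
    (p : ℝ → ℕ → ℕ → ℝ)
    (hzero : ∀ t : ℝ, ∀ i j : ℕ, N < i + j → p t i j = 0)
    (hode : ∀ t : ℝ, ∀ i j : ℕ, i + j ≤ N → HasDerivAt (fun t => p t i j)
      (-(β * i * ((N : ℝ) - i - j) / N + ν * i + ζ * i + ρ * j) * p t i j +
        (if i = 0 then 0 else
          β * ((i : ℝ) - 1) * ((N : ℝ) - ((i : ℝ) - 1) - j) / N * p t (i - 1) j) +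
        ν * ((i : ℝ) + 1) * p t (i + 1) j +
        (if j = 0 then 0 else ζ * ((i : ℝ) + 1) * p t (i + 1) (j - 1)) +
        (if i = 0 then 0 else ρ * ((j : ℝ) + 1) * p t (i - 1) (j + 1))) t) :
    ∀ t : ℝ, ∀ ℓ : ℕ, ℓ ≤ N →
      HasDerivAt (fun t => ∑ i ∈ Finset.range (ℓ + 1), p t i (ℓ - i))
        (-(β * ((N : ℝ) - ℓ) / N + ν) *
            (∑ i ∈ Finset.range (ℓ + 1), (i : ℝ) * p t i (ℓ - i)) +
          (if ℓ = 0 then 0 else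
            β / N * ((N : ℝ) - ((ℓ : ℝ) - 1)) *
              (∑ i ∈ Finset.range ℓ, (i : ℝ) * p t i (ℓ - 1 - i))) +
          ν * (∑ i ∈ Finset.range (ℓ + 2), (i : ℝ) * p t i (ℓ + 1 - i))) t :=
  siqs_diagonal_sum_master_equation_general β ν ζ ρ N p hode
end
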